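/- arXiv:1601.06215 — 3 statements merged into one kernel-verified Lean document; each statement's English description precedes it below -/
import Mathlib

section
/- For all square-free monomials f, g in m variables: f ⪯ g if and only if the multiplicative complement of g is ⪯ the multiplicative complement of f (i.e., ǧ ⪯ f̌). -/
/-! `S ⪯ T` holds iff for every threshold `x`, `S` has at most as many indices `≥ x` as `T`:
one direction counts along the componentwise comparison of the sorted lists, the other matches
the largest element of `S` greedily with the largest element of `T` and inducts. Since the
indices `≥ x` of `S` and of its complement together number `m - x`, complementing both sets
reverses all these inequalities. -/

/-- The partial order `⪯` on square-free monomials (identified with their sets of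
variable indices). -/
def preceq {m : ℕ} (S T : Finset (Fin m)) : Prop :=
  ∃ T' ⊆ T, T'.card = S.card ∧
    List.Forall₂ (· ≤ ·) (S.sort (· ≤ ·)) (T'.sort (· ≤ ·))

open Finset

theorem List.Forall₂.countP_le {α β : Type*} {R : α → β → Prop} {p : α → Bool} {q : β → Bool}
    {l₁ : List α} {l₂ : List β} (h : List.Forall₂ R l₁ l₂)
    (hpq : ∀ a b, R a b → p a → q b) : l₁.countP p ≤ l₂.countP q := by
  induction h with
  | nil => rfl
  | @cons a b _ _ hab _ ih =>
    have hab' : (if p a then 1 else 0) ≤ (if q b then 1 else 0) := by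
      by_cases ha : p a <;> simp [ha, hpq a b hab]
    simp only [List.countP_cons]
    omega

namespace Finset

variable {α : Type*}

theorem countP_sort (s : Finset α) (r : α → α → Prop) [DecidableRel r] [IsTrans α r]
    [Std.Antisymm r] [Std.Total r] (p : α → Prop) [DecidablePred p] :
    (s.sort r).countP (fun x => decide (p x)) = #{x ∈ s | p x} := by
  rw [← Multiset.coe_countP, sort_eq, Multiset.countP_eq_card_filter]
  rfl

theorem card_filter_add_card_filter_compl [Fintype α] [DecidableEq α] (s : Finset α)
    (p : α → Prop) [DecidablePred p] : #{x ∈ s | p x} + #{x ∈ sᶜ | p x} = #{x | p x} := by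
  rw [← card_union_of_disjoint (disjoint_filter_filter disjoint_compl_right), ← filter_union,
    union_compl]

variable [LinearOrder α]

theorem sort_insert_of_forall_le {s : Finset α} {a : α} (h₁ : ∀ b ∈ s, b ≤ a) (h₂ : a ∉ s) :
    (insert a s).sort (· ≤ ·) = s.sort (· ≤ ·) ++ [a] := by
  refine List.Perm.eq_of_pairwise' (pairwise_sort _ _) ?_ ?_
  · exact List.pairwise_append.2 ⟨pairwise_sort _ _, List.pairwise_singleton _ a,
      fun b hb c hc => List.eq_of_mem_singleton hc ▸ h₁ b ((mem_sort _).1 hb)⟩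
  · rw [← Multiset.coe_eq_coe, sort_eq, ← Multiset.coe_add, sort_eq, insert_val_of_notMem h₂,
      add_comm]
    rfl

theorem card_filter_le_le_of_forall₂_sort {S T : Finset α}
    (h : List.Forall₂ (· ≤ ·) (S.sort (· ≤ ·)) (T.sort (· ≤ ·))) (x : α) :
    #{y ∈ S | x ≤ y} ≤ #{y ∈ T | x ≤ y} := by
  rw [← countP_sort _ (· ≤ ·), ← countP_sort _ (· ≤ ·)]
  exact h.countP_le fun a b hab ha => decide_eq_true ((of_decide_eq_true ha).trans hab)

theorem exists_subset_forall₂_sort_of_card_filter_le (S : Finset α) :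
    ∀ T : Finset α, (∀ x, #{y ∈ S | x ≤ y} ≤ #{y ∈ T | x ≤ y}) →
      ∃ T' ⊆ T, #T' = #S ∧ List.Forall₂ (· ≤ ·) (S.sort (· ≤ ·)) (T'.sort (· ≤ ·)) := by
  induction S using Finset.induction_on_max with
  | empty => exact fun T _ => ⟨∅, empty_subset T, rfl, by simp⟩
  | insert a s has ih =>
    intro T h
    have haS : a ∉ s := fun ha => lt_irrefl a (has a ha)
    obtain ⟨y, hyT, hay⟩ : ∃ y ∈ T, a ≤ y := by
      simpa only [filter_nonempty_iff] using card_pos.1 ((card_pos.2 ⟨a, by simp⟩).trans_le (h a))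
    set t := T.max' ⟨y, hyT⟩
    have htT : t ∈ T := T.max'_mem _
    have hat : a ≤ t := hay.trans (T.le_max' y hyT)
    have hcount : ∀ x, #{y ∈ s | x ≤ y} ≤ #{y ∈ T.erase t | x ≤ y} := by
      intro x
      rcases le_or_gt x a with hxa | hax
      · have hx := h x
        rw [filter_insert, if_pos hxa, card_insert_of_notMem (by simp [haS])] at hx
        have hT : #{y ∈ T.erase t | x ≤ y} + 1 = #{y ∈ T | x ≤ y} := by
          rw [filter_erase]
          exact card_erase_add_one (mem_filter.2 ⟨htT, hxa.trans hat⟩)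
        omega
      · have hs : #{y ∈ s | x ≤ y} = 0 := card_eq_zero.2 <|
          filter_eq_empty_iff.2 fun y hy hxy => (hax.trans_le hxy).not_gt (has y hy)
        omega
    obtain ⟨T', hT'T, hcard, hsort⟩ := ih (T.erase t) hcount
    have htT' : t ∉ T' := fun ht => notMem_erase t T (hT'T ht)
    refine ⟨insert t T', insert_subset htT (hT'T.trans (erase_subset t T)), ?_, ?_⟩
    · rw [card_insert_of_notMem htT', card_insert_of_notMem haS, hcard]
    · rw [sort_insert_of_forall_le (fun b hb => (has b hb).le) haS,
        sort_insert_of_forall_le (fun b hb => T.le_max' b (mem_of_mem_erase (hT'T hb))) htT']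
      exact List.rel_append hsort (.cons hat .nil)

end Finset

theorem preceq_iff_card_filter_le {m : ℕ} (S T : Finset (Fin m)) :
    preceq S T ↔ ∀ x, #{y ∈ S | x ≤ y} ≤ #{y ∈ T | x ≤ y} := by
  refine ⟨fun ⟨T', hT'T, _, hsort⟩ x => ?_, exists_subset_forall₂_sort_of_card_filter_le S T⟩
  exact (card_filter_le_le_of_forall₂_sort hsort x).trans
    (card_le_card (filter_subset_filter _ hT'T))

/-- `f ⪯ g` iff `ǧ ⪯ f̌`, where `ˇ` is the multiplicative
complement (complement of the index set). -/
theorem preceq_compl_iff {m : ℕ} (S T : Finset (Fin m)) :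
    preceq S T ↔ preceq Tᶜ Sᶜ := by
  rw [preceq_iff_card_filter_le, preceq_iff_card_filter_le]
  refine forall_congr' fun x => ?_
  have hS := card_filter_add_card_filter_compl S (x ≤ ·)
  have hT := card_filter_add_card_filter_compl T (x ≤ ·)
  omega
end

section
/- Let C(I) be a decreasing monomial code in m variables. Then r-(C(I)^⊥) = m - 1 - r+(C(I)) and r+(C(I)^⊥) = m - 1 - r-(C(I)). -/
/-- A decreasing set of monomials. -/
def Decreasing {m : ℕ} (I : Finset (Finset (Fin m))) : Prop :=
  ∀ f ∈ I, ∀ g, preceq g f → g ∈ I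

/-- The monomial `x_0 x_1 ⋯ x_{r-1}`. -/
def initSeg (m r : ℕ) : Finset (Fin m) :=
  Finset.univ.filter (fun i : Fin m => i.val < r)

/-- The monomial `x_{m-r} ⋯ x_{m-1}`. -/
def topSeg (m r : ℕ) : Finset (Fin m) :=
  Finset.univ.filter (fun i : Fin m => m - r ≤ i.val)

/-- `r₊(C(I))`: the largest `r ≤ m` with `x_0⋯x_{r-1} ∈ I`; equivalently the
smallest `r` with `C(I) ⊆ R(r,m)`. -/
noncomputable def rPlus {m : ℕ} (I : Finset (Finset (Fin m))) : ℕ :=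
  sSup { r | r ≤ m ∧ initSeg m r ∈ I }

/-- `r₋(C(I))`: the largest `r ≤ m` with `x_{m-r}⋯x_{m-1} ∈ I`; equivalently the
largest `r` with `R(r,m) ⊆ C(I)`. -/
noncomputable def rMinus {m : ℕ} (I : Finset (Finset (Fin m))) : ℕ :=
  sSup { r | r ≤ m ∧ topSeg m r ∈ I }

/-- The defining set `M_m \ Ǐ` of the dual of the decreasing monomial code
`C(I)`. -/
def dualSet {m : ℕ} (I : Finset (Finset (Fin m))) : Finset (Finset (Fin m)) :=
  Finset.univ \ I.image (fun f => fᶜ)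

lemma preceq_of_subset {m : ℕ} {S T : Finset (Fin m)} (h : S ⊆ T) : preceq S T :=
  ⟨S, h, rfl, List.forall₂_same.2 fun x _ => le_refl x⟩

lemma mem_dualSet {m : ℕ} {I : Finset (Finset (Fin m))} {S : Finset (Fin m)} :
    S ∈ dualSet I ↔ Sᶜ ∉ I := by
  simp only [dualSet, Finset.mem_sdiff, Finset.mem_univ, true_and, Finset.mem_image,
    not_exists, not_and]
  constructor
  · intro h hc; exact h Sᶜ hc (compl_compl S)
  · intro h f hf hfc
    exact h (by rw [← hfc, compl_compl]; exact hf)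

lemma topSeg_compl {m : ℕ} (r : ℕ) : (topSeg m r)ᶜ = initSeg m (m - r) := by
  ext i; have := i.isLt; simp [topSeg, initSeg]; omega

lemma initSeg_compl {m : ℕ} (r : ℕ) : (initSeg m r)ᶜ = topSeg m (m - r) := by
  ext i; have := i.isLt; simp [topSeg, initSeg]; omega

lemma initSeg_subset {m : ℕ} {s r : ℕ} (h : s ≤ r) : initSeg m s ⊆ initSeg m r := by
  intro i hi; simp [initSeg] at hi ⊢; omega

lemma topSeg_subset {m : ℕ} {s r : ℕ} (h : s ≤ r) : topSeg m s ⊆ topSeg m r := by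
  intro i hi; simp [topSeg] at hi ⊢; omega

lemma key {m : ℕ} {I : Finset (Finset (Fin m))} (hI : Decreasing I)
    (hprop : I ≠ Finset.univ) (f : ℕ → Finset (Fin m))
    (hmono : ∀ s r : ℕ, s ≤ r → f s ⊆ f r) (h0 : f 0 ∈ I) (hm : f m = Finset.univ) :
    sSup {r | r ≤ m ∧ f r ∈ I} < m ∧
      ∀ s, s ≤ m → (f s ∈ I ↔ s ≤ sSup {r | r ≤ m ∧ f r ∈ I}) := by
  set A : Set ℕ := {r | r ≤ m ∧ f r ∈ I} with hA
  have hAne : A.Nonempty := ⟨0, Nat.zero_le m, h0⟩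
  have hAbdd : BddAbove A := ⟨m, fun r hr => hr.1⟩
  have hp : sSup A ∈ A := Nat.sSup_mem hAne hAbdd
  have hlt : sSup A < m := by
    rcases lt_or_eq_of_le hp.1 with h | h
    · exact h
    · exfalso
      apply hprop
      apply Finset.eq_univ_iff_forall.2
      intro S
      have huniv : Finset.univ ∈ I := by
        have h2 := hp.2; rw [h, hm] at h2; exact h2
      exact hI _ huniv S (preceq_of_subset (Finset.subset_univ S))
  refine ⟨hlt, fun s hs => ⟨fun h => le_csSup hAbdd ⟨hs, h⟩, fun h => ?_⟩⟩
  exact hI _ hp.2 _ (preceq_of_subset (hmono _ _ h))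

theorem rPlus_rMinus_dual' {m : ℕ} (I : Finset (Finset (Fin m)))
    (hI : Decreasing I) (hne : I.Nonempty) (hprop : I ≠ Finset.univ) :
    sSup { r | r ≤ m ∧ topSeg m r ∈ dualSet I } = m - 1 - sSup { r | r ≤ m ∧ initSeg m r ∈ I } ∧
    sSup { r | r ≤ m ∧ initSeg m r ∈ dualSet I } = m - 1 - sSup { r | r ≤ m ∧ topSeg m r ∈ I } := by
  obtain ⟨g, hg⟩ := hne
  have hempty : ∅ ∈ I := hI g hg ∅ (preceq_of_subset (Finset.empty_subset g))
  have hi0 : initSeg m 0 = (∅ : Finset (Fin m)) := by ext i; simp [initSeg]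
  have him : initSeg m m = (Finset.univ : Finset (Fin m)) := by
    ext i; simp [initSeg, i.isLt]
  have ht0 : topSeg m 0 = (∅ : Finset (Fin m)) := by
    ext i; simp [topSeg]
  have htm : topSeg m m = (Finset.univ : Finset (Fin m)) := by simp [topSeg]
  obtain ⟨hp_lt, hp_iff⟩ := key hI hprop (initSeg m)
    (fun s r h => initSeg_subset h) (hi0 ▸ hempty) him
  obtain ⟨hq_lt, hq_iff⟩ := key hI hprop (topSeg m)
    (fun s r h => topSeg_subset h) (ht0 ▸ hempty) htm
  set p := sSup {r | r ≤ m ∧ initSeg m r ∈ I} with hpdef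
  set q := sSup {r | r ≤ m ∧ topSeg m r ∈ I} with hqdef
  constructor
  · have hset : {r | r ≤ m ∧ topSeg m r ∈ dualSet I} = Set.Iic (m - 1 - p) := by
      ext r
      simp only [Set.mem_setOf_eq, Set.mem_Iic, mem_dualSet, topSeg_compl]
      constructor
      · rintro ⟨hr, hni⟩
        have h2 := (hp_iff (m - r) (Nat.sub_le m r)).2
        have h3 : ¬ (m - r ≤ p) := fun h => hni (h2 h)
        omega
      · intro hr
        have h1 := (hp_iff (m - r) (Nat.sub_le m r)).1
        exact ⟨by omega, fun h => by have := h1 h; omega⟩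
    rw [hset, csSup_Iic]
  · have hset : {r | r ≤ m ∧ initSeg m r ∈ dualSet I} = Set.Iic (m - 1 - q) := by
      ext r
      simp only [Set.mem_setOf_eq, Set.mem_Iic, mem_dualSet, initSeg_compl]
      constructor
      · rintro ⟨hr, hni⟩
        have h2 := (hq_iff (m - r) (Nat.sub_le m r)).2
        have h3 : ¬ (m - r ≤ q) := fun h => hni (h2 h)
        omega
      · intro hr
        have h1 := (hq_iff (m - r) (Nat.sub_le m r)).1
        exact ⟨by omega, fun h => by have := h1 h; omega⟩
    rw [hset, csSup_Iic]


/-- for a (nontrivial) decreasing monomial code `C(I)`, whose dual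
is the decreasing monomial code `C(M_m \ Ǐ)`, one has
`r₋(C(I)^⊥) = m - 1 - r₊(C(I))` and `r₊(C(I)^⊥) = m - 1 - r₋(C(I))`. -/
theorem rPlus_rMinus_dual {m : ℕ} (I : Finset (Finset (Fin m)))
    (hI : Decreasing I) (hne : I.Nonempty) (hprop : I ≠ Finset.univ) :
    rMinus (dualSet I) = m - 1 - rPlus I ∧
    rPlus (dualSet I) = m - 1 - rMinus I := by
  exact rPlus_rMinus_dual' I hI hne hprop
end

section
/- For any square-free monomial g of degree d in m variables, the cardinality of the orbit of g under LTA(m,2) equals 2^{d + |λ_g|}, where |λ_g| = Σ_{k=1}^{d} (i_k - (k-1)) for g = x_{i_1}···x_{i_d} with i_1 < ... < i_d. -/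
open MvPolynomial

/-- The ring `R_m = F_2[x_0,…,x_{m-1}]/(x_i^2 - x_i)`. -/
def Rring (m : ℕ) : Type :=
  MvPolynomial (Fin m) (ZMod 2) ⧸
    Ideal.span { P : MvPolynomial (Fin m) (ZMod 2) | ∃ i, P = X i ^ 2 - X i }

noncomputable instance (m : ℕ) : CommRing (Rring m) := Ideal.Quotient.commRing _
noncomputable instance (m : ℕ) : Algebra (ZMod 2) (Rring m) := Ideal.Quotient.algebra _

/-- The class in `R_m` of a polynomial. -/
noncomputable def rmk {m : ℕ} (P : MvPolynomial (Fin m) (ZMod 2)) : Rring m :=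
  Ideal.Quotient.mk _ P

/-- `A` is lower unitriangular. -/
def LowerUni {m : ℕ} (A : Matrix (Fin m) (Fin m) (ZMod 2)) : Prop :=
  (∀ i, A i i = 1) ∧ (∀ i j : Fin m, i < j → A i j = 0)

/-- Image of the variable `x_i` under the affine substitution `(A,b)`:
`∑_j a_{ij} x_j + b_i` (which is `x_i + ∑_{j<i} a_{ij} x_j + b_i` when `A` is
lower unitriangular). -/
noncomputable def subVar {m : ℕ} (A : Matrix (Fin m) (Fin m) (ZMod 2))
    (b : Fin m → ZMod 2) (i : Fin m) : MvPolynomial (Fin m) (ZMod 2) :=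
  (∑ j, C (A i j) * X j) + C (b i)

/-- The orbit in `R_m` of the monomial `g` under the action of `LTA(m,2)` by
substitution. -/
noncomputable def orbitLTA {m : ℕ} (g : Finset (Fin m)) : Set (Rring m) :=
  { P | ∃ A b, LowerUni A ∧ P = rmk (∏ i ∈ g, subVar A b i) }

/-- Membership in the subgroup `LTA(m,2)_g`: `b_i = 0` for `i ∉ ind(g)` and
`a_{ij} = 0` (off the diagonal) whenever `i ∉ ind(g)` or `j ∈ ind(g)`. -/
def stabCond {m : ℕ} (g : Finset (Fin m)) (A : Matrix (Fin m) (Fin m) (ZMod 2))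
    (b : Fin m → ZMod 2) : Prop :=
  (∀ i, i ∉ g → b i = 0) ∧
  (∀ i j : Fin m, i ≠ j → (i ∉ g ∨ j ∈ g) → A i j = 0)

/-!
In `R_m` every element is idempotent and `2 = 0`, so `(f + h + 1) * h = f * h` for all `f, h`.
Hence, for `i ≠ j` in `g`, replacing the factor `f_i` of `g ∘ (A, b) = ∏_{i ∈ g} f_i` by
`f_i + f_j + 1` (a row operation on `(A, b)` that keeps `A` lower unitriangular when `j < i`)
does not change the product. Such row operations clear the entries `a_{ij}` with `i, j ∈ g`, and
rows outside `g` do not enter the product at all, so the orbit is the image of `LTA(m,2)_g`.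

On `LTA(m,2)_g` the map `(A, b) ↦ g ∘ (A, b)` is injective: the product is the indicator of the
affine subspace `x_i = 1 + b_i + ∑_{j ∉ g} a_{ij} x_j` (`i ∈ g`), a graph over the coordinates
outside `g`, and evaluating at its points recovers `A` and `b`. Finally `LTA(m,2)_g` has `d` free
translation coordinates and, in row `i_k`, the `i_k - (k - 1)` free columns `j < i_k` outside `g`.
-/

theorem IsIdempotentElem.add_of_two_eq_zero {R : Type*} [CommRing R] (h2 : (2 : R) = 0)
    {a b : R} (ha : IsIdempotentElem a) (hb : IsIdempotentElem b) :
    IsIdempotentElem (a + b) := by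
  unfold IsIdempotentElem
  linear_combination ha.eq + hb.eq + a * b * h2

theorem Finset.prod_update_add_add_one {ι R : Type*} [DecidableEq ι] [CommRing R]
    (h2 : (2 : R) = 0) {s : Finset ι} {f : ι → R} {i j : ι} (hi : i ∈ s) (hj : j ∈ s)
    (hij : i ≠ j) (hfj : IsIdempotentElem (f j)) :
    ∏ t ∈ s, Function.update f i (f i + f j + 1) t = ∏ t ∈ s, f t := by
  rw [Finset.prod_update_of_mem hi, Finset.sdiff_singleton_eq_erase,
    ← Finset.mul_prod_erase s f hi, ← Finset.mul_prod_erase _ f (Finset.mem_erase.2 ⟨hij.symm, hj⟩)]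
  linear_combination (∏ t ∈ (s.erase i).erase j, f t) * (hfj.eq + f j * h2)

theorem Fintype.mem_piFinset_ite_univ_singleton {ι α : Type*} [Fintype ι] [DecidableEq ι]
    [DecidableEq α] [Fintype α] {s : Finset ι} {c f : ι → α} :
    f ∈ Fintype.piFinset (fun i => if i ∈ s then Finset.univ else {c i}) ↔ ∀ i ∉ s, f i = c i := by
  simp only [Fintype.mem_piFinset]
  refine forall_congr' fun i => ?_
  split_ifs with hi <;> simp [hi]

theorem Fintype.card_piFinset_ite_univ_singleton {ι α : Type*} [Fintype ι] [DecidableEq ι]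
    [Fintype α] [DecidableEq α] (s : Finset ι) (c : ι → α) :
    (Fintype.piFinset fun i => if i ∈ s then Finset.univ else {c i}).card =
      Fintype.card α ^ s.card := by
  simp [apply_ite Finset.card, Finset.prod_ite_mem]

theorem Finset.card_filter_lt_orderEmbOfFin {α : Type*} [LinearOrder α] (s : Finset α) {n : ℕ}
    (h : s.card = n) (k : Fin n) : (s.filter (· < s.orderEmbOfFin h k)).card = k := by
  have : s.filter (· < s.orderEmbOfFin h k) =
      (Finset.Iio k).map (s.orderEmbOfFin h).toEmbedding := by
    ext x
    simp only [Finset.mem_filter, Finset.mem_map, Finset.mem_Iio, RelEmbedding.coe_toEmbedding]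
    constructor
    · rintro ⟨hx, hxk⟩
      obtain ⟨a, rfl⟩ : x ∈ Set.range (s.orderEmbOfFin h) := by simpa using hx
      exact ⟨a, (s.orderEmbOfFin h).lt_iff_lt.1 hxk, rfl⟩
    · rintro ⟨a, hak, rfl⟩
      exact ⟨s.orderEmbOfFin_mem h a, (s.orderEmbOfFin h).lt_iff_lt.2 hak⟩
  rw [this, Finset.card_map, Fin.card_Iio]

namespace Rring

variable {m : ℕ}

noncomputable def mk : MvPolynomial (Fin m) (ZMod 2) →+* Rring m := Ideal.Quotient.mk _

theorem rmk_eq_mk (P : MvPolynomial (Fin m) (ZMod 2)) : rmk P = mk P := rfl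

theorem mk_surjective : Function.Surjective (mk : MvPolynomial (Fin m) (ZMod 2) → Rring m) :=
  Ideal.Quotient.mk_surjective

theorem two_eq_zero : (2 : Rring m) = 0 := by
  rw [← map_ofNat (algebraMap (ZMod 2) (Rring m)) 2, show (OfNat.ofNat 2 : ZMod 2) = 0 from rfl,
    map_zero]

theorem isIdempotentElem_mk_X (i : Fin m) : IsIdempotentElem (mk (X i) : Rring m) := by
  rw [IsIdempotentElem, ← sub_eq_zero, ← map_mul, ← map_sub, ← sq]
  exact Ideal.Quotient.eq_zero_iff_mem.2 (Ideal.subset_span ⟨i, rfl⟩)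

theorem isIdempotentElem (p : Rring m) : IsIdempotentElem p := by
  obtain ⟨P, rfl⟩ := mk_surjective p
  induction P using MvPolynomial.induction_on with
  | C a =>
    have ha : a * a = a := by fin_cases a <;> rfl
    rw [IsIdempotentElem, ← map_mul, ← map_mul, ha]
  | add P Q hP hQ => rw [map_add]; exact hP.add_of_two_eq_zero two_eq_zero hQ
  | mul_X P i hP => rw [map_mul]; exact hP.mul (isIdempotentElem_mk_X i)

noncomputable def eval (x : Fin m → ZMod 2) : Rring m →+* ZMod 2 :=
  Ideal.Quotient.lift _ (MvPolynomial.eval x) fun P hP => by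
    refine Ideal.span_le (I := RingHom.ker (MvPolynomial.eval x)).2 ?_ hP
    rintro _ ⟨i, rfl⟩
    simp only [SetLike.mem_coe, RingHom.mem_ker, map_sub, map_pow, eval_X]
    generalize x i = a
    fin_cases a <;> rfl

theorem eval_rmk (x : Fin m → ZMod 2) (P : MvPolynomial (Fin m) (ZMod 2)) :
    eval x (rmk P) = MvPolynomial.eval x P := rfl

end Rring

section Reduction

variable {m : ℕ} (g : Finset (Fin m))

/-- The image `g ∘ (A, b)` of the monomial `g` under the substitution `(A, b)`. -/
noncomputable def substProd (A : Matrix (Fin m) (Fin m) (ZMod 2)) (b : Fin m → ZMod 2) :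
    Rring m :=
  rmk (∏ i ∈ g, subVar A b i)

theorem substProd_congr {A A' : Matrix (Fin m) (Fin m) (ZMod 2)} {b b' : Fin m → ZMod 2}
    (hA : ∀ i ∈ g, A i = A' i) (hb : ∀ i ∈ g, b i = b' i) :
    substProd g A b = substProd g A' b' := by
  unfold substProd subVar
  rw [Finset.prod_congr rfl fun i hi => by rw [hA i hi, hb i hi]]

theorem subVar_updateRow_add (A : Matrix (Fin m) (Fin m) (ZMod 2)) (b : Fin m → ZMod 2)
    (i j : Fin m) :
    subVar (A.updateRow i (A i + A j)) (Function.update b i (b i + b j + 1)) =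
      Function.update (subVar A b) i (subVar A b i + subVar A b j + 1) := by
  funext t
  rcases eq_or_ne t i with rfl | hti
  · simp only [subVar, Matrix.updateRow_self, Function.update_self, Pi.add_apply, map_add,
      add_mul, Finset.sum_add_distrib, map_one]
    ring
  · simp only [subVar, Matrix.updateRow_ne hti, Function.update_of_ne hti]

theorem substProd_updateRow_add (A : Matrix (Fin m) (Fin m) (ZMod 2)) (b : Fin m → ZMod 2)
    {i j : Fin m} (hi : i ∈ g) (hj : j ∈ g) (hij : i ≠ j) :
    substProd g (A.updateRow i (A i + A j)) (Function.update b i (b i + b j + 1)) =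
      substProd g A b := by
  simp only [substProd, Rring.rmk_eq_mk, map_prod, subVar_updateRow_add]
  rw [Finset.prod_congr rfl fun t _ => Function.apply_update (fun _ => Rring.mk) _ _ _ t]
  simp only [map_add, map_one]
  exact Finset.prod_update_add_add_one Rring.two_eq_zero hi hj hij (Rring.isIdempotentElem _)

theorem LowerUni.updateRow_add {A : Matrix (Fin m) (Fin m) (ZMod 2)} (hA : LowerUni A)
    {i j : Fin m} (hji : j < i) : LowerUni (A.updateRow i (A i + A j)) := by
  constructor
  · intro t
    rcases eq_or_ne t i with rfl | hti
    · simp [hA.1, hA.2 j t hji]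
    · simp [Matrix.updateRow_ne hti, hA.1]
  · intro t k htk
    rcases eq_or_ne t i with rfl | hti
    · simp [hA.2 _ _ htk, hA.2 j k (hji.trans htk)]
    · simp [Matrix.updateRow_ne hti, hA.2 _ _ htk]

/-- Row `i` is cleared in the columns of `g` from right to left: the row operation with `j < i`
only changes entries in columns `≤ j`. -/
theorem exists_clean_row {i : Fin m} (hi : i ∈ g) (k : ℕ) :
    ∀ A b, LowerUni A → (∀ j ∈ g, j ≠ i → k ≤ (j : ℕ) → A i j = 0) →
      ∃ A' b', LowerUni A' ∧ (∀ t ≠ i, A' t = A t) ∧ (∀ j ∈ g, j ≠ i → A' i j = 0) ∧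
        substProd g A' b' = substProd g A b := by
  induction k with
  | zero =>
    exact fun A b hA hclean =>
      ⟨A, b, hA, fun _ _ => rfl, fun j hj hji => hclean j hj hji (Nat.zero_le _), rfl⟩
  | succ k ih =>
    intro A b hA hclean
    by_cases hk : ∃ j ∈ g, j ≠ i ∧ (j : ℕ) = k ∧ A i j ≠ 0
    · obtain ⟨j, hj, hji, rfl, hAij⟩ := hk
      have hji_lt : j < i := lt_of_le_of_ne (not_lt.1 fun h => hAij (hA.2 i j h)) hji
      have hclean' : ∀ j' ∈ g, j' ≠ i → (j : ℕ) ≤ j' → A.updateRow i (A i + A j) i j' = 0 := by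
        intro j' hj' hj'i hle
        rw [Matrix.updateRow_self, Pi.add_apply]
        rcases hle.eq_or_lt with h | h
        · rw [← Fin.ext h, Fin.eq_one_of_ne_zero _ hAij, hA.1]
          rfl
        · rw [hclean j' hj' hj'i h, hA.2 j j' h, add_zero]
      obtain ⟨A', b', hA', hrows, hrow, hprod⟩ :=
        ih _ (Function.update b i (b i + b j + 1)) (hA.updateRow_add hji_lt) hclean'
      exact ⟨A', b', hA', fun t ht => (hrows t ht).trans (Matrix.updateRow_ne ht), hrow,
        hprod.trans (substProd_updateRow_add g A b hi hj hji.symm)⟩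
    · push Not at hk
      refine ih A b hA fun j hj hji hle => ?_
      rcases hle.eq_or_lt with h | h
      · exact hk j hj hji h.symm
      · exact hclean j hj hji h

theorem exists_clean_rows {A : Matrix (Fin m) (Fin m) (ZMod 2)} (hA : LowerUni A)
    (b : Fin m → ZMod 2) :
    ∃ A' b', LowerUni A' ∧ (∀ i ∈ g, ∀ j ∈ g, j ≠ i → A' i j = 0) ∧
      substProd g A' b' = substProd g A b := by
  refine Finset.induction_on' (motive := fun s => ∃ A' b', LowerUni A' ∧
    (∀ i ∈ s, ∀ j ∈ g, j ≠ i → A' i j = 0) ∧ substProd g A' b' = substProd g A b) g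
    ⟨A, b, hA, by simp, rfl⟩ ?_
  rintro i s hi - his ⟨A₁, b₁, hA₁, hclean₁, hprod₁⟩
  obtain ⟨A₂, b₂, hA₂, hrows, hrow, hprod₂⟩ :=
    exists_clean_row g hi m A₁ b₁ hA₁ fun j _ _ hj => absurd j.isLt (not_lt.2 hj)
  refine ⟨A₂, b₂, hA₂, ?_, hprod₂.trans hprod₁⟩
  rintro t ht j hj hjt
  rcases Finset.mem_insert.1 ht with rfl | hts
  · exact hrow j hj hjt
  · rw [hrows t (ne_of_mem_of_not_mem hts his)]
    exact hclean₁ t hts j hj hjt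

/-- The subgroup `LTA(m,2)_g`, as a set of pairs `(A, b)`. -/
def ltaComplement : Set (Matrix (Fin m) (Fin m) (ZMod 2) × (Fin m → ZMod 2)) :=
  {p | LowerUni p.1 ∧ stabCond g p.1 p.2}

theorem exists_mem_ltaComplement {A : Matrix (Fin m) (Fin m) (ZMod 2)} (hA : LowerUni A)
    (b : Fin m → ZMod 2) :
    ∃ p ∈ ltaComplement g, substProd g p.1 p.2 = substProd g A b := by
  obtain ⟨A₁, b₁, hA₁, hclean, hprod⟩ := exists_clean_rows g hA b
  let A' : Matrix (Fin m) (Fin m) (ZMod 2) :=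
    Matrix.of fun i => if i ∈ g then A₁ i else (1 : Matrix (Fin m) (Fin m) (ZMod 2)) i
  let b' : Fin m → ZMod 2 := fun i => if i ∈ g then b₁ i else 0
  have hA' : LowerUni A' := by
    refine ⟨fun i => ?_, fun i j hij => ?_⟩
    · by_cases hi : i ∈ g <;> simp [A', hi, hA₁.1]
    · by_cases hi : i ∈ g <;> simp [A', hi, hA₁.2 i j hij, hij.ne]
  have hs' : stabCond g A' b' := by
    refine ⟨fun i hi => by simp [b', hi], fun i j hij hij' => ?_⟩
    by_cases hi : i ∈ g
    · simp [A', hi, hclean i hi j (hij'.resolve_left (not_not.2 hi)) hij.symm]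
    · simp [A', hi, hij]
  refine ⟨(A', b'), ⟨hA', hs'⟩, (substProd_congr g (fun i hi => ?_) fun i hi => ?_).trans hprod⟩
  · ext j; simp [A', hi]
  · simp [b', hi]

theorem orbitLTA_eq_image :
    orbitLTA g = (fun p => substProd g p.1 p.2) '' ltaComplement g := by
  ext P
  constructor
  · rintro ⟨A, b, hA, rfl⟩
    exact exists_mem_ltaComplement g hA b
  · rintro ⟨⟨A, b⟩, ⟨hA, -⟩, rfl⟩
    exact ⟨A, b, hA, rfl⟩

end Reduction

section Injectivity

variable {m : ℕ} {g : Finset (Fin m)}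

theorem eval_subVar_of_stabCond {A : Matrix (Fin m) (Fin m) (ZMod 2)} {b : Fin m → ZMod 2}
    (hA : LowerUni A) (hs : stabCond g A b) (x : Fin m → ZMod 2) {i : Fin m} (hi : i ∈ g) :
    MvPolynomial.eval x (subVar A b i) = x i + (∑ j ∈ gᶜ, A i j * x j + b i) := by
  have hdiag : ∑ j ∈ g, A i j * x j = x i := by
    rw [Finset.sum_eq_single_of_mem i hi fun j hj hji => by
      rw [hs.2 i j hji.symm (Or.inr hj), zero_mul], hA.1, one_mul]
  simp only [subVar, map_add, map_sum, map_mul, eval_C, eval_X]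
  rw [← Finset.sum_add_sum_compl g, hdiag, add_assoc]

/-- Evaluate both products at the point of the affine subspace of `p` lying over `y`. -/
theorem offRow_eq_of_substProd_eq {p q : Matrix (Fin m) (Fin m) (ZMod 2) × (Fin m → ZMod 2)}
    (hp : p ∈ ltaComplement g) (hq : q ∈ ltaComplement g)
    (h : substProd g p.1 p.2 = substProd g q.1 q.2) (y : Fin m → ZMod 2) {i : Fin m}
    (hi : i ∈ g) :
    ∑ j ∈ gᶜ, p.1 i j * y j + p.2 i = ∑ j ∈ gᶜ, q.1 i j * y j + q.2 i := by
  set x : Fin m → ZMod 2 := fun t => if t ∈ g then 1 + (∑ j ∈ gᶜ, p.1 t j * y j + p.2 t) else y t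
  have hxy : ∀ (B : Matrix (Fin m) (Fin m) (ZMod 2)) t,
      ∑ j ∈ gᶜ, B t j * x j = ∑ j ∈ gᶜ, B t j * y j :=
    fun B t => Finset.sum_congr rfl fun j hj => by simp [x, Finset.mem_compl.1 hj]
  have hpx : Rring.eval x (substProd g p.1 p.2) = 1 := by
    rw [substProd, Rring.eval_rmk, map_prod]
    refine Finset.prod_eq_one fun t ht => ?_
    rw [eval_subVar_of_stabCond hp.1 hp.2 x ht, hxy]
    simp only [x, if_pos ht]
    exact (by decide : ∀ a : ZMod 2, 1 + a + a = 1) _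
  have hqx : MvPolynomial.eval x (subVar q.1 q.2 i) ≠ 0 := by
    intro h0
    rw [h, substProd, Rring.eval_rmk, map_prod, Finset.prod_eq_zero hi h0] at hpx
    exact zero_ne_one hpx
  rw [eval_subVar_of_stabCond hq.1 hq.2 x hi, hxy] at hqx
  simp only [x, if_pos hi] at hqx
  exact (by decide : ∀ a c : ZMod 2, 1 + a + c ≠ 0 → a = c) _ _ hqx

end Injectivity

section Counting

variable {m : ℕ} (g : Finset (Fin m))

def freeCols (i : Fin m) : Finset (Fin m) :=
  if i ∈ g then Finset.Iio i \ g else ∅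

theorem mem_freeCols {i j : Fin m} : j ∈ freeCols g i ↔ i ∈ g ∧ j ∉ g ∧ j < i := by
  unfold freeCols
  split_ifs with hi <;> simp [hi, and_comm]

theorem mem_ltaComplement_iff {p : Matrix (Fin m) (Fin m) (ZMod 2) × (Fin m → ZMod 2)} :
    p ∈ ltaComplement g ↔
      (∀ i j, j ∉ freeCols g i → p.1 i j = (1 : Matrix (Fin m) (Fin m) (ZMod 2)) i j) ∧
        ∀ i ∉ g, p.2 i = 0 := by
  simp only [mem_freeCols, not_and, not_lt]
  constructor
  · rintro ⟨⟨hdiag, hlower⟩, hb, hoff⟩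
    refine ⟨fun i j hij => ?_, hb⟩
    rcases eq_or_ne i j with rfl | hne
    · rw [hdiag, Matrix.one_apply_eq]
    rw [Matrix.one_apply_ne hne]
    rcases hne.lt_or_gt with hlt | hgt
    · exact hlower i j hlt
    · refine hoff i j hne ?_
      by_contra! h
      exact (hij h.1 h.2).not_gt hgt
  · rintro ⟨hA, hb⟩
    have hoff : ∀ i j, i ≠ j → (i ∈ g → j ∉ g → i ≤ j) → p.1 i j = 0 := fun i j hne hij => by
      rw [hA i j hij, Matrix.one_apply_ne hne]
    refine ⟨⟨fun i => by simpa using hA i i fun _ _ => le_rfl, fun i j hij =>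
      hoff i j hij.ne fun _ _ => hij.le⟩, hb, fun i j hne hij => hoff i j hne fun hi hj => ?_⟩
    exact absurd (hij.resolve_left (not_not.2 hi)) hj

theorem substProd_injOn : Set.InjOn (fun p => substProd g p.1 p.2) (ltaComplement g) := by
  intro p hp q hq h
  have hb : ∀ i ∈ g, p.2 i = q.2 i := fun i hi => by
    simpa using offRow_eq_of_substProd_eq hp hq h 0 hi
  have hA : ∀ i j, i ∈ g → j ∉ g → p.1 i j = q.1 i j := fun i j hi hj => by
    simpa [Pi.single_apply, hj, hb i hi] using offRow_eq_of_substProd_eq hp hq h (Pi.single j 1) hi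
  rw [mem_ltaComplement_iff] at hp hq
  refine Prod.ext (Matrix.ext fun i j => ?_) (funext fun i => ?_)
  · by_cases hj : j ∈ freeCols g i
    · obtain ⟨hi, hj, -⟩ := (mem_freeCols g).1 hj
      exact hA i j hi hj
    · rw [hp.1 i j hj, hq.1 i j hj]
  · by_cases hi : i ∈ g
    · exact hb i hi
    · rw [hp.2 i hi, hq.2 i hi]

theorem card_ltaComplement :
    Nat.card (ltaComplement g) = 2 ^ (g.card + ∑ i, (freeCols g i).card) := by
  have : ltaComplement g =
      ↑((Fintype.piFinset fun i => Fintype.piFinset fun j =>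
          if j ∈ freeCols g i then Finset.univ else {(1 : Matrix (Fin m) (Fin m) (ZMod 2)) i j}).map
            Matrix.of.toEmbedding ×ˢ
        Fintype.piFinset fun i => if i ∈ g then Finset.univ else {(0 : ZMod 2)}) := by
    ext p
    simp only [mem_ltaComplement_iff, Finset.coe_product, Set.mem_prod, Finset.mem_coe,
      Finset.mem_map_equiv]
    rw [Fintype.mem_piFinset]
    simp only [Fintype.mem_piFinset_ite_univ_singleton]
    rfl
  rw [this, Nat.card_coe_set_eq, Set.ncard_coe_finset, Finset.card_product, Finset.card_map,
    Fintype.card_piFinset]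
  simp only [Fintype.card_piFinset_ite_univ_singleton, ZMod.card]
  rw [Finset.prod_pow_eq_pow_sum, pow_add, mul_comm]

theorem card_freeCols_orderEmbOfFin (k : Fin g.card) :
    (freeCols g (g.orderEmbOfFin rfl k)).card = (g.orderEmbOfFin rfl k : ℕ) - k := by
  have hg : g ∩ Finset.Iio (g.orderEmbOfFin rfl k) = g.filter (· < g.orderEmbOfFin rfl k) := by
    ext; simp
  rw [freeCols, if_pos (g.orderEmbOfFin_mem rfl k), Finset.card_sdiff, Fin.card_Iio, hg,
    Finset.card_filter_lt_orderEmbOfFin]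

theorem sum_card_freeCols :
    ∑ i, (freeCols g i).card =
      ∑ k ∈ Finset.range g.card, (((g.sort (· ≤ ·)).map Fin.val).getD k 0 - k) := by
  calc ∑ i, (freeCols g i).card
      = ∑ i ∈ g, (freeCols g i).card := by
        simp [freeCols, apply_ite Finset.card]
    _ = ∑ k : Fin g.card, (freeCols g (g.orderEmbOfFin rfl k)).card := by
        rw [← Finset.sum_coe_sort g]
        exact ((g.orderIsoOfFin rfl).toEquiv.sum_comp fun i => (freeCols g i).card).symm
    _ = _ := by
        rw [Finset.sum_range]
        refine Finset.sum_congr rfl fun k _ => ?_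
        rw [card_freeCols_orderEmbOfFin, List.getD_eq_getElem _ _ (by simp), List.getElem_map,
          Finset.orderEmbOfFin_apply, Fin.getElem_fin]

end Counting

/-- the orbit of a degree-`d` monomial `g = x_{i_1}⋯x_{i_d}`
(`i_1 < … < i_d`) under `LTA(m,2)` has cardinality `2^{d + |λ_g|}`, where
`|λ_g| = ∑_{k=1}^{d} (i_k - (k-1))` (sum over the 0-indexed positions of the
sorted index sequence of `g`). -/
theorem orbit_card_eq {m : ℕ} (g : Finset (Fin m)) :
    Nat.card (orbitLTA g) =
      2 ^ (g.card + ∑ k ∈ Finset.range g.card,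
        (((g.sort (· ≤ ·)).map Fin.val).getD k 0 - k)) := by
  rw [orbitLTA_eq_image, Nat.card_image_of_injOn (substProd_injOn g), card_ltaComplement,
    sum_card_freeCols]
end
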